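/- Let a, b ∈ ℝ with |a| + |b| < 4·3^{−3/4}. Then the bivariate polynomial g(x,y) = x⁴ + a·x³y + b·xy³ + y⁴ is coercive on ℝ². -/

import Mathlib

/-!
Weighted AM–GM gives `|x³y| ≤ K (x⁴ + y⁴)` with `K = 3^{3/4}/4 = (4 · 3^{-3/4})⁻¹`, and likewise
for `xy³`. Hence `g(x,y) ≥ (1 - (|a| + |b|) K) (x⁴ + y⁴)`, whose leading constant is positive by
hypothesis, and `x⁴ + y⁴` dominates the fourth power of the norm.
-/

open Filter

/-- `g` is coercive on `ℝ²`: `g(x,y) → +∞` whenever `‖(x,y)‖ → +∞`. -/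
def Coercive2 (g : ℝ × ℝ → ℝ) : Prop :=
  Tendsto g (comap (fun p : ℝ × ℝ => ‖p‖) atTop) atTop

lemma coercive2_of_const_mul_norm_pow_le {g : ℝ × ℝ → ℝ} {c : ℝ} {n : ℕ} (hc : 0 < c)
    (hn : n ≠ 0) (h : ∀ p, c * ‖p‖ ^ n ≤ g p) : Coercive2 g :=
  tendsto_atTop_mono h <|
    ((tendsto_pow_atTop hn).const_mul_atTop hc).comp tendsto_comap

lemma norm_prod_pow_le_add {E F : Type*} [SeminormedAddCommGroup E] [SeminormedAddCommGroup F]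
    (p : E × F) (n : ℕ) : ‖p‖ ^ n ≤ ‖p.1‖ ^ n + ‖p.2‖ ^ n := by
  rw [Prod.norm_def]
  rcases max_cases ‖p.1‖ ‖p.2‖ with ⟨h, _⟩ | ⟨h, _⟩ <;> rw [h]
  · exact le_add_of_nonneg_right (by positivity)
  · exact le_add_of_nonneg_left (by positivity)

lemma norm_pow_four_le (p : ℝ × ℝ) : ‖p‖ ^ 4 ≤ p.1 ^ 4 + p.2 ^ 4 := by
  simpa only [Real.norm_eq_abs, Even.pow_abs ⟨2, rfl⟩] using norm_prod_pow_le_add p 4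

/-- AM–GM for `u/3, u/3, u/3, v`; equality at `u = 3v`. -/
lemma mul_pow_three_le_of_nonneg {u v : ℝ} (hu : 0 ≤ u) (hv : 0 ≤ v) :
    256 * (u ^ 3 * v) ≤ 27 * (u + v) ^ 4 := by
  have hfactor : 27 * (u + v) ^ 4 - 256 * (u ^ 3 * v) =
      (u - 3 * v) ^ 2 * (27 * u ^ 2 + 14 * u * v + 3 * v ^ 2) := by ring
  have : 0 ≤ (u - 3 * v) ^ 2 * (27 * u ^ 2 + 14 * u * v + 3 * v ^ 2) := by positivity
  linarith

lemma abs_pow_three_mul_le (x y : ℝ) :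
    |x ^ 3 * y| ≤ (3 : ℝ) ^ ((3 : ℝ) / 4) / 4 * (x ^ 4 + y ^ 4) := by
  have hK4 : ((3 : ℝ) ^ ((3 : ℝ) / 4)) ^ 4 = 27 := by
    rw [← Real.rpow_natCast, ← Real.rpow_mul (by norm_num)]
    norm_num
  have hamgm := mul_pow_three_le_of_nonneg (by positivity : 0 ≤ x ^ 4) (by positivity : 0 ≤ y ^ 4)
  refine le_of_pow_le_pow_left₀ four_ne_zero (by positivity) ?_
  calc |x ^ 3 * y| ^ 4 = (x ^ 4) ^ 3 * y ^ 4 := by rw [Even.pow_abs ⟨2, rfl⟩]; ring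
    _ ≤ 27 / 256 * (x ^ 4 + y ^ 4) ^ 4 := by linarith
    _ = _ := by rw [mul_pow, div_pow, hK4]; norm_num

lemma quartic_ge_mul_sum_pow_four (a b x y : ℝ) :
    (1 - (|a| + |b|) * ((3 : ℝ) ^ ((3 : ℝ) / 4) / 4)) * (x ^ 4 + y ^ 4) ≤
      x ^ 4 + a * x ^ 3 * y + b * x * y ^ 3 + y ^ 4 := by
  set K : ℝ := (3 : ℝ) ^ ((3 : ℝ) / 4) / 4
  have hxy : |x ^ 3 * y| ≤ K * (x ^ 4 + y ^ 4) := abs_pow_three_mul_le x y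
  have hyx : |y ^ 3 * x| ≤ K * (x ^ 4 + y ^ 4) := by
    rw [add_comm (x ^ 4)]; exact abs_pow_three_mul_le y x
  have ha : -(|a| * (K * (x ^ 4 + y ^ 4))) ≤ a * x ^ 3 * y := by
    rw [mul_assoc]
    exact (neg_abs_le _).trans' (by rw [abs_mul]; gcongr)
  have hb : -(|b| * (K * (x ^ 4 + y ^ 4))) ≤ b * x * y ^ 3 := by
    rw [mul_assoc, mul_comm x]
    exact (neg_abs_le _).trans' (by rw [abs_mul]; gcongr)
  linarith

lemma four_mul_rpow_neg_three_div_four :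
    4 * (3 : ℝ) ^ (-(3 : ℝ) / 4) = 1 / ((3 : ℝ) ^ ((3 : ℝ) / 4) / 4) := by
  rw [neg_div, Real.rpow_neg (by norm_num), one_div_div]
  exact (div_eq_mul_inv _ _).symm

/-- `g(x,y) = x⁴ + a x³ y + b x y³ + y⁴` is coercive on `ℝ²` whenever
`|a| + |b| < 4 · 3^(−3/4)`. -/
theorem stmt17 (a b : ℝ) (hab : |a| + |b| < 4 * (3 : ℝ) ^ (-(3 : ℝ) / 4)) :
    Coercive2 (fun p : ℝ × ℝ =>
      p.1 ^ 4 + a * p.1 ^ 3 * p.2 + b * p.1 * p.2 ^ 3 + p.2 ^ 4) := by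
  set K : ℝ := (3 : ℝ) ^ ((3 : ℝ) / 4) / 4
  have hK : 0 < K := by positivity
  have hc : 0 < 1 - (|a| + |b|) * K := by
    rw [four_mul_rpow_neg_three_div_four, lt_div_iff₀ hK] at hab
    linarith
  refine coercive2_of_const_mul_norm_pow_le hc four_ne_zero fun p => ?_
  calc (1 - (|a| + |b|) * K) * ‖p‖ ^ 4 ≤ (1 - (|a| + |b|) * K) * (p.1 ^ 4 + p.2 ^ 4) :=
        mul_le_mul_of_nonneg_left (norm_pow_four_le p) hc.le
    _ ≤ _ := quartic_ge_mul_sum_pow_four a b p.1 p.2
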